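/- For real numbers a, t with 1 < a < t, set m₂ = t²(a²−1)/(a²(t²−1)). Then I₂(a,a;t) + I₄(a,a;t) = 2·K(m₂)/√(t²−1), i.e. ∫_{-a}^{-1} √((a−z)/((t²−z²)(z²−1)(z+a))) dz + ∫_{1}^{a} √((a−z)/((t²−z²)(z²−1)(z+a))) dz = (2/√(t²−1))·∫₀^{π/2} dθ/√(1 − m₂·sin²θ). -/

import Mathlib

open MeasureTheory intervalIntegral Real Filter Topology

/-- Period integral `I₁`. -/
noncomputable def I1 (a b t : ℝ) : ℝ :=
  ∫ z in (-t)..(-a), Real.sqrt ((b - z) / ((t ^ 2 - z ^ 2) * (z ^ 2 - 1) * (-z - a)))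

/-- Period integral `J₁`. -/
noncomputable def J1 (a b t : ℝ) : ℝ :=
  ∫ z in (-t)..(-a), Real.sqrt ((-z - a) / ((t ^ 2 - z ^ 2) * (z ^ 2 - 1) * (b - z)))

/-- Period integral `I₂`. -/
noncomputable def I2 (a b t : ℝ) : ℝ :=
  ∫ z in (-a)..(-1), Real.sqrt ((b - z) / ((t ^ 2 - z ^ 2) * (z ^ 2 - 1) * (z + a)))

/-- Period integral `J₂`. -/
noncomputable def J2 (a b t : ℝ) : ℝ :=
  ∫ z in (-a)..(-1), Real.sqrt ((z + a) / ((t ^ 2 - z ^ 2) * (z ^ 2 - 1) * (b - z)))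

/-- Period integral `I₄`. -/
noncomputable def I4 (a b t : ℝ) : ℝ :=
  ∫ z in (1:ℝ)..b, Real.sqrt ((b - z) / ((t ^ 2 - z ^ 2) * (z ^ 2 - 1) * (z + a)))

/-- Period integral `J₄`. -/
noncomputable def J4 (a b t : ℝ) : ℝ :=
  ∫ z in (1:ℝ)..b, Real.sqrt ((z + a) / ((t ^ 2 - z ^ 2) * (z ^ 2 - 1) * (b - z)))

/-- Period integral `I₅`. -/
noncomputable def I5 (a b t : ℝ) : ℝ :=
  ∫ z in b..t, Real.sqrt ((z - b) / ((t ^ 2 - z ^ 2) * (z ^ 2 - 1) * (z + a)))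

/-- Period integral `J₅`. -/
noncomputable def J5 (a b t : ℝ) : ℝ :=
  ∫ z in b..t, Real.sqrt ((z + a) / ((t ^ 2 - z ^ 2) * (z ^ 2 - 1) * (z - b)))

/-- The period quotient `Q(a,b;t)`. -/
noncomputable def Q (a b t : ℝ) : ℝ :=
  (I1 a b t + I5 a b t) / (I2 a b t + I4 a b t)
    - (J1 a b t + J5 a b t) / (J2 a b t + J4 a b t)

/-- Complete elliptic integral of the first kind `K(m)`. -/
noncomputable def Kint (m : ℝ) : ℝ :=
  ∫ θ in (0:ℝ)..(π / 2), 1 / Real.sqrt (1 - m * Real.sin θ ^ 2)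

/-- Complete elliptic integral of the second kind `E(m)`. -/
noncomputable def Eint (m : ℝ) : ℝ :=
  ∫ θ in (0:ℝ)..(π / 2), Real.sqrt (1 - m * Real.sin θ ^ 2)

/-!
The substitution `z = a / √(a² - (a² - 1) sin² θ)` maps `(0, π/2)` increasingly onto `(1, a)` and
satisfies `dz/dθ = z √((z² - 1)(a² - z²)) / a`. After the reflection `z ↦ -z`, `I₂` is also an
integral over `(1, a)`, and the substitution turns the integrands of `I₂` and `I₄` into
`z (a ± z) / (a √(t² - z²))`. Their sum `2 z / √(t² - z²)` is exactly
`(2 / √(t² - 1)) (1 - m₂ sin² θ)^(-1/2)`.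
-/

open Set

lemma sqrt_mul_sqrt_div_eq {W N M T : ℝ} (hW : 0 < W) (hN : 0 ≤ N) (hM : 0 < M) (hT : 0 < T) :
    √(W * (N * M)) * √(N / (T * W * M)) = N / √T := by
  rw [← sqrt_mul (by positivity), show W * (N * M) * (N / (T * W * M)) = N ^ 2 / T by
    field_simp, sqrt_div (sq_nonneg N), sqrt_sq hN]

lemma sin_mul_cos_pos {θ : ℝ} (hθ : θ ∈ Ioo 0 (π / 2)) : 0 < sin θ * cos θ :=
  mul_pos (sin_pos_of_pos_of_lt_pi hθ.1 (by linarith [hθ.2, pi_pos]))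
    (cos_pos_of_mem_Ioo ⟨by linarith [hθ.1, pi_pos], hθ.2⟩)

namespace EllipticSubst

variable {a t θ : ℝ}

noncomputable def den (a θ : ℝ) : ℝ := a ^ 2 - (a ^ 2 - 1) * sin θ ^ 2

noncomputable def z (a θ : ℝ) : ℝ := a / √(den a θ)

noncomputable def dz (a θ : ℝ) : ℝ :=
  a * (a ^ 2 - 1) * (sin θ * cos θ) / (den a θ * √(den a θ))

lemma one_le_den (ha : 1 < a) (θ : ℝ) : 1 ≤ den a θ := by
  have : 0 ≤ (a ^ 2 - 1) * (1 - sin θ ^ 2) :=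
    mul_nonneg (by nlinarith) (by linarith [sin_sq_le_one θ])
  unfold den
  linarith

lemma den_pos (ha : 1 < a) (θ : ℝ) : 0 < den a θ := one_pos.trans_le (one_le_den ha θ)

lemma z_sq (ha : 1 < a) (θ : ℝ) : z a θ ^ 2 = a ^ 2 / den a θ := by
  rw [z, div_pow, sq_sqrt (den_pos ha θ).le]

lemma z_sq_lt (ha : 1 < a) (hat : a < t) (θ : ℝ) : z a θ ^ 2 < t ^ 2 := by
  rw [z_sq ha, div_lt_iff₀ (den_pos ha θ)]
  nlinarith [one_le_den ha θ]

lemma continuous_z (ha : 1 < a) : Continuous (z a) :=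
  continuous_const.div (by unfold den; fun_prop) fun θ => (sqrt_pos.2 (den_pos ha θ)).ne'

lemma hasDerivAt_z (ha : 1 < a) (θ : ℝ) : HasDerivAt (z a) (dz a θ) θ := by
  have hD : HasDerivAt (den a) (-((a ^ 2 - 1) * (2 * sin θ ^ 1 * cos θ))) θ :=
    (((hasDerivAt_sin θ).pow 2).const_mul _).const_sub _
  have hS := sqrt_pos.2 (den_pos ha θ)
  refine ((hasDerivAt_const θ a).div (hD.sqrt (den_pos ha θ).ne') hS.ne').congr_deriv ?_
  rw [dz]
  field_simp
  rw [sq_sqrt (den_pos ha θ).le]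
  field_simp [(den_pos ha θ).ne']
  ring

lemma dz_pos (ha : 1 < a) (hθ : θ ∈ Ioo 0 (π / 2)) : 0 < dz a θ := by
  have := sin_mul_cos_pos hθ
  have := den_pos ha θ
  have : 0 < a ^ 2 - 1 := by nlinarith
  unfold dz
  positivity

lemma strictMonoOn_z (ha : 1 < a) : StrictMonoOn (z a) (Icc 0 (π / 2)) :=
  strictMonoOn_of_deriv_pos (convex_Icc _ _) (continuous_z ha).continuousOn fun θ hθ => by
    rw [interior_Icc] at hθ
    rw [(hasDerivAt_z ha θ).deriv]
    exact dz_pos ha hθ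

lemma z_zero (ha : 1 < a) : z a 0 = 1 := by
  simp [z, den, sqrt_sq (by linarith : (0 : ℝ) ≤ a), div_self (by linarith : a ≠ 0)]

lemma z_pi_div_two : z a (π / 2) = a := by
  simp [z, den]

lemma image_z_Ioo (ha : 1 < a) : z a '' Ioo 0 (π / 2) = Ioo 1 a := by
  have h0 : (0 : ℝ) ≤ π / 2 := by positivity
  refine Subset.antisymm ?_ ?_
  · rintro _ ⟨θ, hθ, rfl⟩
    have h1 := strictMonoOn_z ha (left_mem_Icc.2 h0) (Ioo_subset_Icc_self hθ) hθ.1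
    have h2 := strictMonoOn_z ha (Ioo_subset_Icc_self hθ) (right_mem_Icc.2 h0) hθ.2
    rw [z_zero ha] at h1
    rw [z_pi_div_two] at h2
    exact ⟨h1, h2⟩
  · simpa [z_zero ha, z_pi_div_two] using intermediate_value_Ioo h0 (continuous_z ha).continuousOn

lemma dz_eq (ha : 1 < a) (hθ : θ ∈ Ioo 0 (π / 2)) :
    dz a θ = z a θ * √((z a θ ^ 2 - 1) * (a ^ 2 - z a θ ^ 2)) / a := by
  have := sin_mul_cos_pos hθ
  have := den_pos ha θ
  have : 0 < a ^ 2 - 1 := by nlinarith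
  have hsqrt : √((z a θ ^ 2 - 1) * (a ^ 2 - z a θ ^ 2)) =
      a * (a ^ 2 - 1) * (sin θ * cos θ) / den a θ := by
    rw [← sqrt_sq (by positivity : 0 ≤ a * (a ^ 2 - 1) * (sin θ * cos θ) / den a θ), z_sq ha]
    congr 1
    field_simp
    unfold den
    linear_combination (-(a ^ 2 - 1) ^ 2 * sin θ ^ 2) * sin_sq_add_cos_sq θ
  rw [hsqrt, dz, z]
  field_simp

lemma intervalIntegral_one_eq_setIntegral (ha : 1 < a) (g : ℝ → ℝ) :
    ∫ x in 1..a, g x =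
      ∫ θ in Ioo 0 (π / 2), z a θ * √((z a θ ^ 2 - 1) * (a ^ 2 - z a θ ^ 2)) / a * g (z a θ) := by
  rw [intervalIntegral.integral_of_le ha.le, integral_Ioc_eq_integral_Ioo, ← image_z_Ioo ha,
    integral_image_eq_integral_abs_deriv_smul measurableSet_Ioo
      (fun θ _ => (hasDerivAt_z ha θ).hasDerivWithinAt)
      ((strictMonoOn_z ha).injOn.mono Ioo_subset_Icc_self)]
  refine setIntegral_congr_fun measurableSet_Ioo fun θ hθ => ?_
  rw [smul_eq_mul, abs_of_pos (dz_pos ha hθ), dz_eq ha hθ]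

lemma intervalIntegral_period_eq (ha : 1 < a) (hat : a < t) {N M : ℝ → ℝ}
    (hN : ∀ x ∈ Ioo 1 a, 0 ≤ N x) (hM : ∀ x ∈ Ioo 1 a, 0 < M x)
    (hNM : ∀ x, N x * M x = a ^ 2 - x ^ 2) :
    ∫ x in 1..a, √(N x / ((t ^ 2 - x ^ 2) * (x ^ 2 - 1) * M x)) =
      ∫ θ in Ioo 0 (π / 2), z a θ * N (z a θ) / (a * √(t ^ 2 - z a θ ^ 2)) := by
  rw [intervalIntegral_one_eq_setIntegral ha]
  refine setIntegral_congr_fun measurableSet_Ioo fun θ hθ => ?_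
  have hx : z a θ ∈ Ioo 1 a := image_z_Ioo ha ▸ mem_image_of_mem _ hθ
  have hW : 0 < z a θ ^ 2 - 1 := by nlinarith [hx.1]
  have hT : 0 < t ^ 2 - z a θ ^ 2 := by nlinarith [z_sq_lt ha hat θ]
  rw [← hNM, div_mul_eq_mul_div, mul_assoc, sqrt_mul_sqrt_div_eq hW (hN _ hx) (hM _ hx) hT]
  field_simp

lemma integrableOn_transformed_integrand (ha : 1 < a) (hat : a < t) {N : ℝ → ℝ}
    (hN : Continuous N) :
    IntegrableOn (fun θ => z a θ * N (z a θ) / (a * √(t ^ 2 - z a θ ^ 2))) (Ioo 0 (π / 2)) := by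
  have hz := continuous_z ha
  refine (Continuous.integrableOn_Icc ?_).mono_set Ioo_subset_Icc_self
  refine (hz.mul (hN.comp hz)).div (continuous_const.mul (by fun_prop)) fun θ => ?_
  have : 0 < t ^ 2 - z a θ ^ 2 := by nlinarith [z_sq_lt ha hat θ]
  have : 0 < a := by linarith
  positivity

lemma transformed_integrand_add_eq (ha : 1 < a) (hat : a < t) (θ : ℝ) :
    z a θ * (a + z a θ) / (a * √(t ^ 2 - z a θ ^ 2)) +
        z a θ * (a - z a θ) / (a * √(t ^ 2 - z a θ ^ 2)) =
      2 / √(t ^ 2 - 1) * (1 / √(1 - t ^ 2 * (a ^ 2 - 1) / (a ^ 2 * (t ^ 2 - 1)) * sin θ ^ 2)) := by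
  have hD := one_le_den ha θ
  have ha0 : 0 < a := by linarith
  have ht1 : 0 < t ^ 2 - 1 := by nlinarith
  have hR : 0 < t ^ 2 * den a θ - a ^ 2 := by nlinarith
  have hm : 1 - t ^ 2 * (a ^ 2 - 1) / (a ^ 2 * (t ^ 2 - 1)) * sin θ ^ 2 =
      (t ^ 2 * den a θ - a ^ 2) / (a ^ 2 * (t ^ 2 - 1)) := by
    unfold den
    field_simp
    ring
  have hT : t ^ 2 - z a θ ^ 2 = (t ^ 2 * den a θ - a ^ 2) / den a θ := by
    rw [z_sq ha]
    field_simp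
  rw [hm, hT, sqrt_div hR.le, sqrt_div hR.le, sqrt_mul (by positivity), sqrt_sq ha0.le, z]
  field_simp
  ring

end EllipticSubst

open EllipticSubst

/-- `I₂(a,a;t) + I₄(a,a;t) = 2 K(m₂)/√(t²−1)` with `m₂ = t²(a²−1)/(a²(t²−1))`. -/
theorem stmt15 (a t : ℝ) (ha : 1 < a) (hat : a < t) :
    I2 a a t + I4 a a t
      = (2 / Real.sqrt (t ^ 2 - 1)) * Kint (t ^ 2 * (a ^ 2 - 1) / (a ^ 2 * (t ^ 2 - 1))) := by
  have hI2 : I2 a a t = ∫ x in 1..a, √((a + x) / ((t ^ 2 - x ^ 2) * (x ^ 2 - 1) * (a - x))) := by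
    rw [I2, ← intervalIntegral.integral_comp_neg]
    congr 1
    ext x
    ring_nf
  rw [hI2, I4,
    intervalIntegral_period_eq (N := fun x => a + x) (M := fun x => a - x) ha hat
      (fun x hx => by linarith [hx.1]) (fun x hx => by linarith [hx.2]) (fun x => by ring),
    intervalIntegral_period_eq (N := fun x => a - x) (M := fun x => x + a) ha hat
      (fun x hx => by linarith [hx.2]) (fun x hx => by linarith [hx.1]) (fun x => by ring),
    ← integral_add (integrableOn_transformed_integrand ha hat (by fun_prop))
      (integrableOn_transformed_integrand ha hat (by fun_prop))]
  simp_rw [transformed_integrand_add_eq ha hat]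
  rw [MeasureTheory.integral_const_mul, Kint, intervalIntegral.integral_of_le (by positivity),
    integral_Ioc_eq_integral_Ioo]
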